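/- arXiv:1503.00134 — 8 statements merged into one kernel-verified Lean document; each statement's English description precedes it below -/
import Mathlib

section
/- The map φ̂(x,y) = (y(1 + (1+y²)²/x²), (1+y²)/x) on ℝ₊² is conjugate to ψ(x,y) = (y, 1/x) via Π̃(x,y) = (y(1+y²)/x, (1+y²)/(xy)); that is, Π̃ ∘ φ̂ = ψ ∘ Π̃ and Π̃ is a bijection of ℝ₊². -/
/-! Writing `Π̃(x, y) = (u, v)`, one has `u / v = y²`, so `y = √(u / v)` and then
`x = (1 + y²) / (v y)`: this gives the inverse of `Π̃` on `ℝ₊²`. The conjugacy rests on the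
identity `φ̂(x, y) = (y (1 + Y²), Y)` with `Y = (1 + y²) / x`. -/

def Qpos : Set (ℝ × ℝ) := {p | 0 < p.1 ∧ 0 < p.2}

/-- Reduced map of F₀. -/
noncomputable def phiHat : ℝ × ℝ → ℝ × ℝ :=
  fun p => (p.2 * (p.1 ^ 2 + (1 + p.2 ^ 2) ^ 2) / p.1 ^ 2, (1 + p.2 ^ 2) / p.1)

noncomputable def psi4 : ℝ × ℝ → ℝ × ℝ := fun p => (p.2, 1 / p.1)

noncomputable def PiTilde : ℝ × ℝ → ℝ × ℝ :=
  fun p => (p.2 * (1 + p.2 ^ 2) / p.1, (1 + p.2 ^ 2) / (p.1 * p.2))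

noncomputable def PiTildeInv (q : ℝ × ℝ) : ℝ × ℝ :=
  ((1 + √(q.1 / q.2) ^ 2) / (q.2 * √(q.1 / q.2)), √(q.1 / q.2))

lemma mapsTo_PiTilde : Set.MapsTo PiTilde Qpos Qpos := by
  rintro ⟨x, y⟩ ⟨hx, hy⟩
  exact ⟨by simp only [PiTilde]; positivity, by simp only [PiTilde]; positivity⟩

lemma mapsTo_PiTildeInv : Set.MapsTo PiTildeInv Qpos Qpos := by
  rintro ⟨u, v⟩ ⟨hu, hv⟩
  have hs : 0 < √(u / v) := Real.sqrt_pos.mpr (div_pos hu hv)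
  exact ⟨by simp only [PiTildeInv]; positivity, hs⟩

lemma PiTilde_fst_div_snd {x y : ℝ} (hx : x ≠ 0) (hy : y ≠ 0) :
    (PiTilde (x, y)).1 / (PiTilde (x, y)).2 = y ^ 2 := by
  have : 1 + y ^ 2 ≠ 0 := by positivity
  simp only [PiTilde]
  field_simp

lemma PiTilde_div_mul {v y : ℝ} (hv : v ≠ 0) (hy : y ≠ 0) :
    PiTilde ((1 + y ^ 2) / (v * y), y) = (v * y ^ 2, v) := by
  have : 1 + y ^ 2 ≠ 0 := by positivity
  simp only [PiTilde, Prod.mk.injEq]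
  constructor <;> field_simp

lemma leftInvOn_PiTildeInv : Set.LeftInvOn PiTildeInv PiTilde Qpos := by
  rintro ⟨x, y⟩ ⟨hx, hy⟩
  have hv : (PiTilde (x, y)).2 ≠ 0 := (mapsTo_PiTilde ⟨hx, hy⟩).2.ne'
  have hsqrt : √((PiTilde (x, y)).1 / (PiTilde (x, y)).2) = y := by
    rw [PiTilde_fst_div_snd hx.ne' hy.ne', Real.sqrt_sq hy.le]
  have : 1 + y ^ 2 ≠ 0 := by positivity
  simp only [PiTildeInv, hsqrt, Prod.mk.injEq, and_true]
  simp only [PiTilde] at hv ⊢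
  field_simp

lemma rightInvOn_PiTildeInv : Set.RightInvOn PiTildeInv PiTilde Qpos := by
  rintro ⟨u, v⟩ ⟨hu, hv⟩
  have hs : 0 < √(u / v) := Real.sqrt_pos.mpr (div_pos hu hv)
  rw [PiTildeInv, PiTilde_div_mul hv.ne' hs.ne', Real.sq_sqrt (div_pos hu hv).le,
    mul_div_cancel₀ u hv.ne']

lemma bijOn_PiTilde : Set.BijOn PiTilde Qpos Qpos :=
  Set.InvOn.bijOn ⟨leftInvOn_PiTildeInv, rightInvOn_PiTildeInv⟩ mapsTo_PiTilde mapsTo_PiTildeInv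

lemma PiTilde_phiHat {x y : ℝ} (hx : x ≠ 0) (hy : y ≠ 0) :
    PiTilde (phiHat (x, y)) = psi4 (PiTilde (x, y)) := by
  have : 1 + y ^ 2 ≠ 0 := by positivity
  have : x ^ 2 + (1 + y ^ 2) ^ 2 ≠ 0 := by positivity
  simp only [phiHat, psi4, PiTilde, Prod.mk.injEq]
  constructor <;> field_simp

theorem phiHat_conjugate_psi4 :
    (∀ p ∈ Qpos, PiTilde (phiHat p) = psi4 (PiTilde p)) ∧
    Set.BijOn PiTilde Qpos Qpos :=
  ⟨fun _ hp => PiTilde_phiHat hp.1.ne' hp.2.ne', bijOn_PiTilde⟩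
end

section
/- The map φ̂(x,y) = (y(x² + (1+y²)²)/x², (1+y²)/x) on ℝ₊² is globally 4-periodic: its fourth iterate is the identity on ℝ₊². -/
noncomputable def phiHatSq (p : ℝ × ℝ) : ℝ × ℝ :=
  ((1 + p.2 ^ 2) ^ 2 / (p.1 * p.2 ^ 2), 1 / p.2)

lemma phiHat_iterate_two {x y : ℝ} (hx : x ≠ 0) (hy : y ≠ 0) :
    phiHat^[2] (x, y) = phiHatSq (x, y) := by
  have hS : x ^ 2 + (1 + y ^ 2) ^ 2 ≠ 0 := by positivity
  simp only [Function.iterate_succ_apply, Function.iterate_zero_apply, phiHat, phiHatSq,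
    Prod.mk.injEq]
  constructor
  · field_simp
    ring
  · field_simp

lemma phiHatSq_ne_zero {x y : ℝ} (hx : x ≠ 0) (hy : y ≠ 0) :
    (phiHatSq (x, y)).1 ≠ 0 ∧ (phiHatSq (x, y)).2 ≠ 0 := by
  simp only [phiHatSq]
  constructor <;> positivity

lemma phiHatSq_phiHatSq {x y : ℝ} (hx : x ≠ 0) (hy : y ≠ 0) :
    phiHatSq (phiHatSq (x, y)) = (x, y) := by
  simp only [phiHatSq, Prod.mk.injEq]
  constructor
  · field_simp
    ring
  · field_simp

lemma phiHat_iterate_four {x y : ℝ} (hx : x ≠ 0) (hy : y ≠ 0) :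
    phiHat^[4] (x, y) = (x, y) := by
  obtain ⟨hx', hy'⟩ := phiHatSq_ne_zero hx hy
  rw [show 4 = 2 + 2 from rfl, Function.iterate_add_apply, phiHat_iterate_two hx hy,
    ← Prod.mk.eta (p := phiHatSq (x, y)), phiHat_iterate_two hx' hy', phiHatSq_phiHatSq hx hy]

theorem phiHat_four_periodic : ∀ p ∈ Qpos, phiHat^[4] p = p := by
  rintro ⟨x, y⟩ ⟨hx, hy⟩
  exact phiHat_iterate_four hx.ne' hy.ne'
end

section
/- The F₀ map φ(x₁,x₂,x₃,x₄) = (x₃, x₄, (x₂²+x₃²)/x₁, (x₁²x₄² + (x₂²+x₃²)²)/(x₁²x₂)) on ℝ₊⁴ is semiconjugate to ψ(x,y) = (y, 1/x) on ℝ₊² via π(x₁,x₂,x₃,x₄) = (x₃(x₂²+x₃²)/(x₁x₂x₄), x₂(x₂²+x₃²)/(x₁x₃x₄)); that is, π ∘ φ = ψ ∘ π. -/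
/-- The F₀ map on ℝ⁴. -/
noncomputable def phiF0 : ℝ × ℝ × ℝ × ℝ → ℝ × ℝ × ℝ × ℝ :=
  fun x =>
    match x with
    | (x1, x2, x3, x4) =>
      (x3, x4, (x2 ^ 2 + x3 ^ 2) / x1,
        (x1 ^ 2 * x4 ^ 2 + (x2 ^ 2 + x3 ^ 2) ^ 2) / (x1 ^ 2 * x2))

noncomputable def piF0 : ℝ × ℝ × ℝ × ℝ → ℝ × ℝ :=
  fun x =>
    match x with
    | (x1, x2, x3, x4) =>
      (x3 * (x2 ^ 2 + x3 ^ 2) / (x1 * x2 * x4), x2 * (x2 ^ 2 + x3 ^ 2) / (x1 * x3 * x4))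

/-!
Writing `z = (x₂² + x₃²)/x₁` for the third coordinate of `φ x`, its fourth coordinate is
`(x₄² + z²)/x₂`, so `φ` is two steps of a recurrence. On points of this shape the
factor `b² + c²` in `π (a, b, c, d)` cancels against `d`, and both coordinates of `π (φ x)` become
monomials in `x₂, x₃, x₄, z`, which are the coordinates of `ψ (π x)` after substituting `z`.
-/

lemma phiF0_eq_recurrence {x1 : ℝ} (h1 : x1 ≠ 0) (x2 x3 x4 : ℝ) :
    phiF0 (x1, x2, x3, x4) =
      (x3, x4, (x2 ^ 2 + x3 ^ 2) / x1, (x4 ^ 2 + ((x2 ^ 2 + x3 ^ 2) / x1) ^ 2) / x2) := by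
  simp only [phiF0, Prod.mk.injEq, true_and]
  field_simp

lemma piF0_of_sq_add_sq_div {b c e : ℝ} (hbc : b ^ 2 + c ^ 2 ≠ 0) (he : e ≠ 0) (a : ℝ) :
    piF0 (a, b, c, (b ^ 2 + c ^ 2) / e) = (c * e / (a * b), b * e / (a * c)) := by
  simp only [piF0, Prod.mk.injEq]
  constructor <;> field_simp

theorem phiF0_semiconjugate_psi4 :
    ∀ x1 x2 x3 x4 : ℝ, 0 < x1 → 0 < x2 → 0 < x3 → 0 < x4 →
      piF0 (phiF0 (x1, x2, x3, x4)) = psi4 (piF0 (x1, x2, x3, x4)) := by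
  intro x1 x2 x3 x4 h1 h2 h3 h4
  have hs : 0 < x2 ^ 2 + x3 ^ 2 := by positivity
  rw [phiF0_eq_recurrence h1.ne', piF0_of_sq_add_sq_div (by positivity) h2.ne']
  simp only [piF0, psi4, Prod.mk.injEq]
  constructor <;> field_simp
end

section
/- The dP₃ map φ(x₁,…,x₆) = (x₃, x₄, x₅, x₆, (x₂x₄+x₃x₅)/x₁, (x₁x₄x₆+x₂x₄x₅+x₃x₅²)/(x₁x₂)) on ℝ₊⁶ is semiconjugate to ψ(x,y) = (y, y/x) on ℝ₊² via π(x₁,…,x₆) = (x₂x₄/(x₃x₅), x₁x₄x₆/(x₅(x₂x₄+x₃x₅))); that is, π ∘ φ = ψ ∘ π. -/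
/-- The dP₃ map on ℝ⁶. -/
noncomputable def phiDP3 : ℝ × ℝ × ℝ × ℝ × ℝ × ℝ → ℝ × ℝ × ℝ × ℝ × ℝ × ℝ :=
  fun x =>
    match x with
    | (x1, x2, x3, x4, x5, x6) =>
      (x3, x4, x5, x6, (x2 * x4 + x3 * x5) / x1,
        (x1 * x4 * x6 + x2 * x4 * x5 + x3 * x5 ^ 2) / (x1 * x2))

noncomputable def psi6 : ℝ × ℝ → ℝ × ℝ := fun p => (p.2, p.2 / p.1)

noncomputable def piDP3 : ℝ × ℝ × ℝ × ℝ × ℝ × ℝ → ℝ × ℝ :=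
  fun x =>
    match x with
    | (x1, x2, x3, x4, x5, x6) =>
      (x2 * x4 / (x3 * x5), x1 * x4 * x6 / (x5 * (x2 * x4 + x3 * x5)))

/-!
Write `S(x) = x₂x₄ + x₃x₅` for the denominator of the second coordinate of `π`, so that
`φ(x)₅ = S(x)/x₁`. The one identity behind the semiconjugacy is `S(φ(x)) = x₂ · φ(x)₆`.
With it, `π₁(φ(x)) = x₄x₆/(x₅ · S(x)/x₁) = π₂(x)`, and
`π₂(φ(x)) = x₃x₆ φ(x)₆ / (φ(x)₅ · x₂ φ(x)₆) = x₁x₃x₆/(x₂ S(x)) = π₂(x)/π₁(x)`.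
-/

section

variable {x1 x2 x3 x4 x5 x6 : ℝ}

theorem piDP3_phiDP3_fst :
    (piDP3 (phiDP3 (x1, x2, x3, x4, x5, x6))).1 = (piDP3 (x1, x2, x3, x4, x5, x6)).2 := by
  simp only [phiDP3, piDP3]
  rw [mul_div_assoc', div_div_eq_mul_div]
  ring

theorem phiDP3_sum_eq (h1 : x1 ≠ 0) (h2 : x2 ≠ 0) :
    x4 * x6 + x5 * ((x2 * x4 + x3 * x5) / x1)
      = x2 * ((x1 * x4 * x6 + x2 * x4 * x5 + x3 * x5 ^ 2) / (x1 * x2)) := by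
  field_simp
  ring

theorem piDP3_phiDP3_snd (h1 : 0 < x1) (h2 : 0 < x2) (h3 : 0 < x3) (h4 : 0 < x4) (h5 : 0 < x5)
    (h6 : 0 < x6) :
    (piDP3 (phiDP3 (x1, x2, x3, x4, x5, x6))).2
      = (piDP3 (x1, x2, x3, x4, x5, x6)).2 / (piDP3 (x1, x2, x3, x4, x5, x6)).1 := by
  simp only [phiDP3, piDP3]
  rw [phiDP3_sum_eq h1.ne' h2.ne']
  have hS : 0 < x2 * x4 + x3 * x5 := by positivity
  have hT : 0 < x1 * x4 * x6 + x2 * x4 * x5 + x3 * x5 ^ 2 := by positivity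
  field_simp

end

theorem phiDP3_semiconjugate_psi6 :
    ∀ x1 x2 x3 x4 x5 x6 : ℝ, 0 < x1 → 0 < x2 → 0 < x3 → 0 < x4 → 0 < x5 → 0 < x6 →
      piDP3 (phiDP3 (x1, x2, x3, x4, x5, x6)) = psi6 (piDP3 (x1, x2, x3, x4, x5, x6)) := by
  intro x1 x2 x3 x4 x5 x6 h1 h2 h3 h4 h5 h6
  exact Prod.ext piDP3_phiDP3_fst (piDP3_phiDP3_snd h1 h2 h3 h4 h5 h6)
end

section
/- Let φ be the F₀ map and C = {x ∈ ℝ₊⁴ : x₂² + x₃² = x₁x₄ and x₃ = x₂}. Then C is invariant under φ, and for any x = (x₁,x₂,x₃,x₄) ∈ C and n ≥ 0, φ^(n)(x) = 2^{n(n−1)/2} (x₂/x₁)ⁿ (x₁, 2ⁿx₂, 2ⁿx₃, 4ⁿx₄). -/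
/-- The fiber C₍₁,₁₎ for the F₀ map. -/
def C11 : Set (ℝ × ℝ × ℝ × ℝ) :=
  {x | (0 < x.1 ∧ 0 < x.2.1 ∧ 0 < x.2.2.1 ∧ 0 < x.2.2.2) ∧
    x.2.1 ^ 2 + x.2.2.1 ^ 2 = x.1 * x.2.2.2 ∧ x.2.2.1 = x.2.1}

def diagScale (c s : ℝ) (x : ℝ × ℝ × ℝ × ℝ) : ℝ × ℝ × ℝ × ℝ :=
  (c * x.1, c * (s * x.2.1), c * (s * x.2.2.1), c * (s ^ 2 * x.2.2.2))

@[simp]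
lemma diagScale_one_one (x : ℝ × ℝ × ℝ × ℝ) : diagScale 1 1 x = x := by
  simp [diagScale]

lemma diagScale_diagScale (c s c' s' : ℝ) (x : ℝ × ℝ × ℝ × ℝ) :
    diagScale c s (diagScale c' s' x) = diagScale (c * c') (s * s') x := by
  simp only [diagScale, Prod.mk.injEq]
  refine ⟨?_, ?_, ?_, ?_⟩ <;> ring

lemma diagScale_ratio {c : ℝ} (hc : c ≠ 0) (s : ℝ) (x : ℝ × ℝ × ℝ × ℝ) :
    (diagScale c s x).2.1 / (diagScale c s x).1 = s * (x.2.1 / x.1) := by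
  simp only [diagScale]
  rw [mul_div_mul_left _ _ hc, mul_div_assoc]

lemma diagScale_mem_C11 {c s : ℝ} (hc : 0 < c) (hs : 0 < s) {x : ℝ × ℝ × ℝ × ℝ}
    (hx : x ∈ C11) : diagScale c s x ∈ C11 := by
  obtain ⟨⟨h1, h2, h3, h4⟩, hquad, h32⟩ := hx
  refine ⟨⟨?_, ?_, ?_, ?_⟩, ?_, ?_⟩ <;> simp only [diagScale]
  any_goals positivity
  · linear_combination (c * s) ^ 2 * hquad
  · rw [h32]

lemma phiF0_eq_diagScale {x : ℝ × ℝ × ℝ × ℝ} (hx : x ∈ C11) :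
    phiF0 x = diagScale (x.2.1 / x.1) 2 x := by
  obtain ⟨x1, x2, x3, x4⟩ := x
  obtain ⟨⟨h1, h2, -, -⟩, hquad, h32⟩ := hx
  dsimp only at h1 h2 hquad h32
  subst x3
  have hx4 : x4 = 2 * x2 ^ 2 / x1 := by
    rw [eq_div_iff h1.ne']
    linear_combination -hquad
  subst hx4
  simp only [phiF0, diagScale, Prod.mk.injEq]
  refine ⟨?_, ?_, ?_, ?_⟩ <;> field_simp <;> ring

lemma phiF0_mem_C11 {x : ℝ × ℝ × ℝ × ℝ} (hx : x ∈ C11) : phiF0 x ∈ C11 := by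
  rw [phiF0_eq_diagScale hx]
  exact diagScale_mem_C11 (div_pos hx.1.2.1 hx.1.1) two_pos hx

lemma phiF0_iterate_eq_diagScale (n : ℕ) {x : ℝ × ℝ × ℝ × ℝ} (hx : x ∈ C11) :
    phiF0^[n] x = diagScale (2 ^ (n * (n - 1) / 2) * (x.2.1 / x.1) ^ n) (2 ^ n) x := by
  induction n generalizing x with
  | zero => simp
  | succ n ih =>
    have hr : 0 < x.2.1 / x.1 := div_pos hx.1.2.1 hx.1.1
    rw [Function.iterate_succ_apply, phiF0_eq_diagScale hx,
      ih (diagScale_mem_C11 hr two_pos hx), diagScale_ratio hr.ne',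
      diagScale_diagScale, Nat.triangle_succ]
    congr 1; ring

theorem phiF0_on_C11 :
    (∀ x ∈ C11, phiF0 x ∈ C11) ∧
    (∀ x1 x2 x3 x4 : ℝ, (x1, x2, x3, x4) ∈ C11 → ∀ n : ℕ,
      phiF0^[n] (x1, x2, x3, x4) =
        ((2 : ℝ) ^ (n * (n - 1) / 2) * (x2 / x1) ^ n * x1,
         (2 : ℝ) ^ (n * (n - 1) / 2) * (x2 / x1) ^ n * (2 ^ n * x2),
         (2 : ℝ) ^ (n * (n - 1) / 2) * (x2 / x1) ^ n * (2 ^ n * x3),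
         (2 : ℝ) ^ (n * (n - 1) / 2) * (x2 / x1) ^ n * (4 ^ n * x4))) := by
  refine ⟨fun x hx => phiF0_mem_C11 hx, fun x1 x2 x3 x4 hx n => ?_⟩
  rw [phiF0_iterate_eq_diagScale n hx, diagScale, ← pow_mul, mul_comm n 2, pow_mul]
  norm_num
end

section
/- Let φ be the F₀ map, a,b > 0, and C_{(a,b)} = {x ∈ ℝ₊⁴ : x₂²+x₃² = √(ab)·x₁x₄, x₃ = √(a/b)·x₂}. Then C_{(a,b)} is invariant under φ^(4), and for x ∈ C_{(a,b)}, φ^(4n)(x) = (k₂/k₁)^{2n(n−1)} (x₂/x₁)^{4n} (k₁ⁿx₁, k₂ⁿx₂, k₂ⁿx₃, (k₂^{2n}/k₁ⁿ)x₄), where k₁ = (1+ab)²(a+b)⁴/(a³b⁵) and k₂ = (1+ab)⁴(a+b)⁶/(a⁵b⁷). -/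
/-- The fiber C₍ₐ,ᵦ₎ for the F₀ map. -/
noncomputable def Cab (a b : ℝ) : Set (ℝ × ℝ × ℝ × ℝ) :=
  {x | (0 < x.1 ∧ 0 < x.2.1 ∧ 0 < x.2.2.1 ∧ 0 < x.2.2.2) ∧
    x.2.1 ^ 2 + x.2.2.1 ^ 2 = Real.sqrt (a * b) * x.1 * x.2.2.2 ∧
    x.2.2.1 = Real.sqrt (a / b) * x.2.1}

/-!
Write `r = √(ab)` and `s = √(a/b)`. A point of the fibre `x₃ = s x₂`, `x₂² + x₃² = r x₁ x₄` is
determined by `(p, q) = (x₁, x₂)`, and `φ` maps the `(r, s)`-fibre onto the `(1/s, r)`-fibre.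
The parameter pair therefore returns after four steps, and `φ⁴` acts on `(p, q)` as the monomial
map `(p, q) ↦ (q/p)⁴ (k₁ p, k₂ q)`. Each application multiplies the ratio `q/p` by `k₂/k₁`, so the
prefactors accumulate to `(k₂/k₁)^(2n(n-1)) (q/p)^(4n)` after `n` applications.
-/

open Real

theorem iterate_apply_of_ratio_pow_four_scaling {α : Type*} {f : α → α} {E : ℝ → ℝ → α}
    {K₁ K₂ : ℝ} (hK₁ : K₁ ≠ 0) (hK₂ : K₂ ≠ 0)
    (hf : ∀ p q, p ≠ 0 → q ≠ 0 → f (E p q) = E ((q / p) ^ 4 * (K₁ * p)) ((q / p) ^ 4 * (K₂ * q)))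
    {p q : ℝ} (hp : p ≠ 0) (hq : q ≠ 0) (n : ℕ) :
    f^[n] (E p q) = E ((K₂ / K₁) ^ (2 * n * (n - 1)) * (q / p) ^ (4 * n) * (K₁ ^ n * p))
      ((K₂ / K₁) ^ (2 * n * (n - 1)) * (q / p) ^ (4 * n) * (K₂ ^ n * q)) := by
  induction n with
  | zero => simp
  | succ n ih =>
    set c := (K₂ / K₁) ^ (2 * n * (n - 1)) * (q / p) ^ (4 * n) with hc_def
    have hc : c ≠ 0 := by positivity
    have hratio : c * (K₂ ^ n * q) / (c * (K₁ ^ n * p)) = K₂ ^ n * q / (K₁ ^ n * p) :=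
      mul_div_mul_left _ _ hc
    have hexp : 2 * (n + 1) * (n + 1 - 1) = 2 * n * (n - 1) + 4 * n := by
      cases n with
      | zero => rfl
      | succ n => simp only [Nat.add_sub_cancel]; ring
    have hcoeff : (K₂ / K₁) ^ (2 * (n + 1) * (n + 1 - 1)) * (q / p) ^ (4 * (n + 1)) =
        c * (K₂ ^ n * q / (K₁ ^ n * p)) ^ 4 := by
      rw [hc_def, mul_div_mul_comm, ← div_pow, hexp, pow_add, mul_add, pow_add]
      ring
    rw [Function.iterate_succ_apply', ih, hf _ _ (by positivity) (by positivity), hratio, hcoeff]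
    congr 1 <;> ring

namespace F0

noncomputable def point (r s p q : ℝ) : ℝ × ℝ × ℝ × ℝ :=
  (p, q, s * q, (1 + s ^ 2) * q ^ 2 / (r * p))

noncomputable def k₁ (r s : ℝ) : ℝ := (1 + r ^ 2) ^ 2 * (1 + s ^ 2) ^ 4 / (r ^ 4 * s ^ 2)

noncomputable def k₂ (r s : ℝ) : ℝ := (1 + r ^ 2) ^ 4 * (1 + s ^ 2) ^ 6 / (r ^ 6 * s ^ 4)

variable {a b r s p q : ℝ}

theorem phiF0_point (hr : r ≠ 0) (hs : s ≠ 0) (hp : p ≠ 0) (hq : q ≠ 0) :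
    phiF0 (point r s p q) = point s⁻¹ r (s * q) ((1 + s ^ 2) * q ^ 2 / (r * p)) := by
  simp only [phiF0, point, Prod.mk.injEq]
  refine ⟨trivial, trivial, ?_, ?_⟩ <;> field_simp

theorem phiF0_iterate_four_point (hr : r ≠ 0) (hs : s ≠ 0) (hp : p ≠ 0) (hq : q ≠ 0) :
    phiF0^[4] (point r s p q) =
      point r s ((q / p) ^ 4 * (k₁ r s * p)) ((q / p) ^ 4 * (k₂ r s * q)) := by
  simp only [Function.iterate_succ_apply', Function.iterate_zero_apply]
  rw [phiF0_point hr hs hp hq, phiF0_point (by positivity) hr (by positivity) (by positivity),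
    phiF0_point (by positivity) (by positivity) (by positivity) (by positivity),
    phiF0_point (by positivity) (by positivity) (by positivity) (by positivity)]
  simp only [point, k₁, k₂, inv_inv, Prod.mk.injEq]
  refine ⟨?_, ?_, ?_, ?_⟩ <;> field_simp <;> ring

theorem k₁_sqrt (ha : 0 < a) (hb : 0 < b) :
    k₁ √(a * b) √(a / b) = (1 + a * b) ^ 2 * (a + b) ^ 4 / (a ^ 3 * b ^ 5) := by
  rw [k₁, show √(a * b) ^ 4 = (√(a * b) ^ 2) ^ 2 by ring, sq_sqrt (by positivity),
    sq_sqrt (by positivity)]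
  field_simp
  ring

theorem k₂_sqrt (ha : 0 < a) (hb : 0 < b) :
    k₂ √(a * b) √(a / b) = (1 + a * b) ^ 4 * (a + b) ^ 6 / (a ^ 5 * b ^ 7) := by
  rw [k₂, show √(a * b) ^ 6 = (√(a * b) ^ 2) ^ 3 by ring,
    show √(a / b) ^ 4 = (√(a / b) ^ 2) ^ 2 by ring, sq_sqrt (by positivity),
    sq_sqrt (by positivity)]
  field_simp
  ring

theorem phiF0_iterate_four_point_sqrt (ha : 0 < a) (hb : 0 < b) (hp : p ≠ 0) (hq : q ≠ 0) :
    phiF0^[4] (point √(a * b) √(a / b) p q) = point √(a * b) √(a / b)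
      ((q / p) ^ 4 * ((1 + a * b) ^ 2 * (a + b) ^ 4 / (a ^ 3 * b ^ 5) * p))
      ((q / p) ^ 4 * ((1 + a * b) ^ 4 * (a + b) ^ 6 / (a ^ 5 * b ^ 7) * q)) := by
  rw [phiF0_iterate_four_point (by positivity) (by positivity) hp hq, k₁_sqrt ha hb, k₂_sqrt ha hb]

theorem mem_Cab_iff (ha : 0 < a) (hb : 0 < b) {x₁ x₂ x₃ x₄ : ℝ} :
    (x₁, x₂, x₃, x₄) ∈ Cab a b ↔ 0 < x₁ ∧ 0 < x₂ ∧ x₃ = √(a / b) * x₂ ∧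
      x₄ = (1 + √(a / b) ^ 2) * x₂ ^ 2 / (√(a * b) * x₁) := by
  constructor
  · rintro ⟨⟨hx₁, hx₂, -, -⟩, hsum, hx₃⟩
    refine ⟨hx₁, hx₂, hx₃, ?_⟩
    rw [eq_div_iff (by positivity)]
    linear_combination (x₃ + √(a / b) * x₂) * hx₃ - hsum
  · rintro ⟨hx₁, hx₂, rfl, rfl⟩
    refine ⟨⟨hx₁, hx₂, by positivity, by positivity⟩, ?_, rfl⟩
    field_simp

end F0

theorem phiF0_fourth_iterate_on_Cab (a b : ℝ) (ha : 0 < a) (hb : 0 < b) :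
    (∀ x ∈ Cab a b, phiF0^[4] x ∈ Cab a b) ∧
    (∀ x1 x2 x3 x4 : ℝ, (x1, x2, x3, x4) ∈ Cab a b → ∀ n : ℕ,
      let k1 : ℝ := (1 + a * b) ^ 2 * (a + b) ^ 4 / (a ^ 3 * b ^ 5)
      let k2 : ℝ := (1 + a * b) ^ 4 * (a + b) ^ 6 / (a ^ 5 * b ^ 7)
      let c : ℝ := (k2 / k1) ^ (2 * n * (n - 1)) * (x2 / x1) ^ (4 * n)
      phiF0^[4 * n] (x1, x2, x3, x4) =
        (c * (k1 ^ n * x1), c * (k2 ^ n * x2), c * (k2 ^ n * x3),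
         c * (k2 ^ (2 * n) / k1 ^ n * x4))) := by
  constructor
  · rintro ⟨x₁, x₂, x₃, x₄⟩ hx
    obtain ⟨hx₁, hx₂, rfl, rfl⟩ := (F0.mem_Cab_iff ha hb).1 hx
    change phiF0^[4] (F0.point √(a * b) √(a / b) x₁ x₂) ∈ Cab a b
    rw [F0.phiF0_iterate_four_point_sqrt ha hb hx₁.ne' hx₂.ne']
    exact (F0.mem_Cab_iff ha hb).2 ⟨by positivity, by positivity, rfl, rfl⟩
  · intro x₁ x₂ x₃ x₄ hx n
    obtain ⟨hx₁, hx₂, rfl, rfl⟩ := (F0.mem_Cab_iff ha hb).1 hx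
    rw [Function.iterate_mul]
    refine (iterate_apply_of_ratio_pow_four_scaling (by positivity) (by positivity)
      (fun _ _ hp hq ↦ F0.phiF0_iterate_four_point_sqrt ha hb hp hq) hx₁.ne' hx₂.ne' n).trans ?_
    simp only [F0.point, Prod.mk.injEq]
    refine ⟨trivial, trivial, by ring, ?_⟩
    field_simp
    ring
end

section
/- The F₀ map φ has no periodic points in ℝ₊⁴: for every x ∈ ℝ₊⁴ and every m ≥ 1, φ^(m)(x) ≠ x. Moreover each component of φ^(n)(x) tends to +∞ as n → ∞. -/
open Filter Function

/-!
Since `φ` shifts its first two coordinates out, an orbit is `(uₙ, vₙ, uₙ₊₁, vₙ₊₁)` for two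
positive sequences with `uₙ₊₂ uₙ = vₙ² + uₙ₊₁²` and `vₙ₊₂ vₙ = vₙ₊₁² + uₙ₊₂²`. The first relation
makes `ρₙ = uₙ₊₁ / uₙ` strictly increasing, and AM-GM in both relations gives
`ρₙ₊₃ ≥ 2 vₙ₊₂ / uₙ₊₂ ≥ 4 ρₙ`. Hence `ρₙ → ∞`, so `u` grows geometrically, and `vₙ₊₂ ≥ 2 ρₙ uₙ₊₂`
eventually dominates `u`. An orbit along which a coordinate tends to infinity cannot be periodic.
-/

structure F0Recurrence (u v : ℕ → ℝ) : Prop where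
  fst_pos : ∀ n, 0 < u n
  snd_pos : ∀ n, 0 < v n
  fst_rec : ∀ n, u (n + 2) * u n = v n ^ 2 + u (n + 1) ^ 2
  snd_rec : ∀ n, v (n + 2) * v n = v (n + 1) ^ 2 + u (n + 2) ^ 2

theorem tendsto_atTop_of_tendsto_ratio {u : ℕ → ℝ} (hu : ∀ n, 0 < u n)
    (hρ : Tendsto (fun n => u (n + 1) / u n) atTop atTop) : Tendsto u atTop atTop := by
  obtain ⟨N, hN⟩ := eventually_atTop.1 (hρ.eventually_ge_atTop 2)
  have hgeom : Tendsto (fun n => u (n + N)) atTop atTop := by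
    refine tendsto_atTop_of_geom_le (by simpa using hu N) one_lt_two fun n => ?_
    have h := hN (n + N) (Nat.le_add_left N n)
    rwa [le_div_iff₀ (hu _), Nat.add_right_comm] at h
  exact (tendsto_add_atTop_iff_nat N).1 hgeom

namespace F0Recurrence

variable {u v : ℕ → ℝ}

theorem ratio_strictMono (h : F0Recurrence u v) : StrictMono fun n => u (n + 1) / u n := by
  refine strictMono_nat_of_lt_succ fun n => ?_
  rw [div_lt_div_iff₀ (h.fst_pos n) (h.fst_pos (n + 1))]
  nlinarith [h.snd_pos n, h.fst_rec n]

theorem two_mul_mul_le (h : F0Recurrence u v) (n : ℕ) :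
    2 * (v n * u (n + 1)) ≤ u (n + 2) * u n := by
  nlinarith [sq_nonneg (v n - u (n + 1)), h.fst_rec n]

theorem two_mul_div_le_ratio (h : F0Recurrence u v) (n : ℕ) :
    2 * (v n / u n) ≤ u (n + 2) / u (n + 1) := by
  rw [mul_div_assoc', div_le_div_iff₀ (h.fst_pos n) (h.fst_pos (n + 1))]
  linarith [h.two_mul_mul_le n]

theorem two_mul_ratio_le_div (h : F0Recurrence u v) (n : ℕ) :
    2 * (u (n + 1) / u n) ≤ v (n + 2) / u (n + 2) := by
  have hu := h.fst_pos
  rw [mul_div_assoc', div_le_div_iff₀ (hu n) (hu (n + 2))]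
  have hsq : u (n + 2) ^ 2 ≤ v (n + 2) * v n := by nlinarith [h.snd_rec n]
  have hmul : 2 * u (n + 1) * u (n + 2) * v n ≤ v (n + 2) * u n * v n :=
    calc 2 * u (n + 1) * u (n + 2) * v n = 2 * (v n * u (n + 1)) * u (n + 2) := by ring
      _ ≤ u (n + 2) * u n * u (n + 2) :=
        mul_le_mul_of_nonneg_right (h.two_mul_mul_le n) (hu _).le
      _ = u (n + 2) ^ 2 * u n := by ring
      _ ≤ v (n + 2) * v n * u n := by gcongr; exact (hu n).le
      _ = v (n + 2) * u n * v n := by ring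
  exact le_of_mul_le_mul_right hmul (h.snd_pos n)

theorem tendsto_ratio (h : F0Recurrence u v) :
    Tendsto (fun n => u (n + 1) / u n) atTop atTop := by
  have hstep k : 4 * (u (3 * k + 1) / u (3 * k)) ≤ u (3 * (k + 1) + 1) / u (3 * (k + 1)) := by
    have h₁ := h.two_mul_ratio_le_div (3 * k)
    have h₂ := h.two_mul_div_le_ratio (3 * k + 2)
    rw [show 3 * (k + 1) = 3 * k + 2 + 1 by ring]
    linarith
  have hsub : Tendsto (fun k => u (3 * k + 1) / u (3 * k)) atTop atTop :=
    tendsto_atTop_of_geom_le (div_pos (h.fst_pos 1) (h.fst_pos 0)) (by norm_num) hstep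
  exact tendsto_atTop_of_monotone_of_subseq (φ := fun k => 3 * k) h.ratio_strictMono.monotone hsub

theorem tendsto_fst (h : F0Recurrence u v) : Tendsto u atTop atTop :=
  tendsto_atTop_of_tendsto_ratio h.fst_pos h.tendsto_ratio

theorem tendsto_snd (h : F0Recurrence u v) : Tendsto v atTop atTop := by
  refine (tendsto_add_atTop_iff_nat 2).1 <|
    tendsto_atTop_mono' atTop ?_ ((tendsto_add_atTop_iff_nat 2).2 h.tendsto_fst)
  filter_upwards [h.tendsto_ratio.eventually_ge_atTop (1 / 2)] with n hρ
  have h1 : 1 ≤ v (n + 2) / u (n + 2) := by linarith [h.two_mul_ratio_le_div n]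
  rwa [le_div_iff₀ (h.fst_pos _), one_mul] at h1

end F0Recurrence

theorem not_tendsto_atTop_of_isPeriodicPt {α : Type*} {f : α → α} {x : α} {m : ℕ} (hm : 0 < m)
    (hx : IsPeriodicPt f m x) (g : α → ℝ) : ¬Tendsto (fun n => g (f^[n] x)) atTop atTop := by
  intro hg
  obtain ⟨N, hN⟩ := eventually_atTop.1 (hg.eventually_gt_atTop (g x))
  have h := hN (m * N) (Nat.le_mul_of_pos_left N hm)
  rw [(hx.mul_const N).eq] at h
  exact lt_irrefl _ h

def posOrthant : Set (ℝ × ℝ × ℝ × ℝ) := {p | 0 < p.1 ∧ 0 < p.2.1 ∧ 0 < p.2.2.1 ∧ 0 < p.2.2.2}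

theorem mapsTo_phiF0_posOrthant : Set.MapsTo phiF0 posOrthant posOrthant := by
  rintro ⟨a, b, c, d⟩ ⟨ha, hb, hc, hd⟩
  exact ⟨hc, hd, by simp only [phiF0]; positivity, by simp only [phiF0]; positivity⟩

theorem phiF0_fst (p : ℝ × ℝ × ℝ × ℝ) : (phiF0 p).1 = p.2.2.1 := rfl

theorem phiF0_snd (p : ℝ × ℝ × ℝ × ℝ) : (phiF0 p).2.1 = p.2.2.2 := rfl

theorem phiF0_phiF0_fst_mul {p : ℝ × ℝ × ℝ × ℝ} (h1 : p.1 ≠ 0) :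
    (phiF0 (phiF0 p)).1 * p.1 = p.2.1 ^ 2 + (phiF0 p).1 ^ 2 := by
  obtain ⟨a, b, c, d⟩ := p
  simp only [phiF0] at h1 ⊢
  field_simp

theorem phiF0_phiF0_snd_mul {p : ℝ × ℝ × ℝ × ℝ} (h1 : p.1 ≠ 0) (h2 : p.2.1 ≠ 0) :
    (phiF0 (phiF0 p)).2.1 * p.2.1 = (phiF0 p).2.1 ^ 2 + (phiF0 (phiF0 p)).1 ^ 2 := by
  obtain ⟨a, b, c, d⟩ := p
  simp only [phiF0] at h1 h2 ⊢
  field_simp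

theorem f0Recurrence_phiF0_iterate {x : ℝ × ℝ × ℝ × ℝ} (hx : x ∈ posOrthant) :
    F0Recurrence (fun n => (phiF0^[n] x).1) (fun n => (phiF0^[n] x).2.1) := by
  have hpos n : phiF0^[n] x ∈ posOrthant := mapsTo_phiF0_posOrthant.iterate n hx
  refine ⟨fun n => (hpos n).1, fun n => (hpos n).2.1, fun n => ?_, fun n => ?_⟩
  all_goals simp only [iterate_succ_apply']
  · exact phiF0_phiF0_fst_mul (hpos n).1.ne'
  · exact phiF0_phiF0_snd_mul (hpos n).1.ne' (hpos n).2.1.ne'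

theorem phiF0_no_periodic_points_and_blowup :
    ∀ x : ℝ × ℝ × ℝ × ℝ,
      0 < x.1 → 0 < x.2.1 → 0 < x.2.2.1 → 0 < x.2.2.2 →
      (∀ m : ℕ, 1 ≤ m → phiF0^[m] x ≠ x) ∧
      Filter.Tendsto (fun n => (phiF0^[n] x).1) Filter.atTop Filter.atTop ∧
      Filter.Tendsto (fun n => (phiF0^[n] x).2.1) Filter.atTop Filter.atTop ∧
      Filter.Tendsto (fun n => (phiF0^[n] x).2.2.1) Filter.atTop Filter.atTop ∧
      Filter.Tendsto (fun n => (phiF0^[n] x).2.2.2) Filter.atTop Filter.atTop := by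
  intro x hx1 hx2 hx3 hx4
  have hrec := f0Recurrence_phiF0_iterate ⟨hx1, hx2, hx3, hx4⟩
  have hu := hrec.tendsto_fst
  have hv := hrec.tendsto_snd
  have hu' : Tendsto (fun n => (phiF0^[n] x).2.2.1) atTop atTop := by
    simpa only [iterate_succ_apply', phiF0_fst] using (tendsto_add_atTop_iff_nat 1).2 hu
  have hv' : Tendsto (fun n => (phiF0^[n] x).2.2.2) atTop atTop := by
    simpa only [iterate_succ_apply', phiF0_snd] using (tendsto_add_atTop_iff_nat 1).2 hv
  exact ⟨fun m hm hper => not_tendsto_atTop_of_isPeriodicPt hm hper Prod.fst hu, hu, hv, hu', hv'⟩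
end

section
/- The functions J₁(x) = (x₁²x₄² + (x₂²+x₃²)²)/(x₁x₂x₃x₄) and J₂(x) = x₁²x₄²/(x₂²+x₃²)² + (x₂²+x₃²)²/(x₁²x₄²) + x₃²/x₂² + x₂²/x₃² are first integrals of the F₀ map φ: J_k(φ(x)) = J_k(x) for all x ∈ ℝ₊⁴ and k = 1, 2. -/
noncomputable def J1 : ℝ × ℝ × ℝ × ℝ → ℝ :=
  fun x =>
    match x with
    | (x1, x2, x3, x4) =>
      (x1 ^ 2 * x4 ^ 2 + (x2 ^ 2 + x3 ^ 2) ^ 2) / (x1 * x2 * x3 * x4)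

noncomputable def J2 : ℝ × ℝ × ℝ × ℝ → ℝ :=
  fun x =>
    match x with
    | (x1, x2, x3, x4) =>
      x1 ^ 2 * x4 ^ 2 / (x2 ^ 2 + x3 ^ 2) ^ 2 + (x2 ^ 2 + x3 ^ 2) ^ 2 / (x1 ^ 2 * x4 ^ 2) +
        x3 ^ 2 / x2 ^ 2 + x2 ^ 2 / x3 ^ 2

/-!
Write `a = x₁x₄ / (x₂² + x₃²)` and `b = x₃ / x₂`. Then `J₁ = (a + a⁻¹)(b + b⁻¹)` and
`J₂ = a² + a⁻² + b² + b⁻²`, while `φ` acts on the pair `(a, b)` as `(a, b) ↦ (b, a⁻¹)`.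
Both expressions are invariant under this substitution because `t + t⁻¹` and `t² + t⁻²`
are invariant under `t ↦ t⁻¹`.
-/

noncomputable def outerRatio : ℝ × ℝ × ℝ × ℝ → ℝ
  | (x1, x2, x3, x4) => x1 * x4 / (x2 ^ 2 + x3 ^ 2)

noncomputable def innerRatio : ℝ × ℝ × ℝ × ℝ → ℝ
  | (_, x2, x3, _) => x3 / x2

theorem J1_eq_mul (x : ℝ × ℝ × ℝ × ℝ) (h2 : x.2.1 ≠ 0) :
    J1 x = (outerRatio x + (outerRatio x)⁻¹) * (innerRatio x + (innerRatio x)⁻¹) := by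
  obtain ⟨x1, x2, x3, x4⟩ := x
  have hs : x2 ^ 2 + x3 ^ 2 ≠ 0 := by positivity
  simp only [J1, outerRatio, innerRatio]
  field_simp
  ring

theorem J2_eq_add (x : ℝ × ℝ × ℝ × ℝ) :
    J2 x = outerRatio x ^ 2 + (outerRatio x)⁻¹ ^ 2 + (innerRatio x ^ 2 + (innerRatio x)⁻¹ ^ 2) := by
  obtain ⟨x1, x2, x3, x4⟩ := x
  simp only [J2, outerRatio, innerRatio, inv_div, div_pow, mul_pow]
  ring

theorem outerRatio_phiF0 (x : ℝ × ℝ × ℝ × ℝ) (h1 : x.1 ≠ 0) (h2 : x.2.1 ≠ 0) :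
    outerRatio (phiF0 x) = innerRatio x := by
  obtain ⟨x1, x2, x3, x4⟩ := x
  have hs : x2 ^ 2 + x3 ^ 2 ≠ 0 := by positivity
  have hn : x1 ^ 2 * x4 ^ 2 + (x2 ^ 2 + x3 ^ 2) ^ 2 ≠ 0 := by positivity
  simp only [phiF0, outerRatio, innerRatio]
  field_simp

theorem innerRatio_phiF0 (x : ℝ × ℝ × ℝ × ℝ) : innerRatio (phiF0 x) = (outerRatio x)⁻¹ := by
  obtain ⟨x1, x2, x3, x4⟩ := x
  simp only [phiF0, outerRatio, innerRatio, div_div, inv_div]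

theorem J1_J2_first_integrals_of_phiF0 :
    ∀ x : ℝ × ℝ × ℝ × ℝ,
      0 < x.1 → 0 < x.2.1 → 0 < x.2.2.1 → 0 < x.2.2.2 →
      J1 (phiF0 x) = J1 x ∧ J2 (phiF0 x) = J2 x := by
  intro x h1 h2 _ h4
  have hφ2 : (phiF0 x).2.1 ≠ 0 := h4.ne'
  rw [J1_eq_mul _ hφ2, J1_eq_mul x h2.ne', J2_eq_add, J2_eq_add,
    outerRatio_phiF0 x h1.ne' h2.ne', innerRatio_phiF0, inv_inv]
  constructor <;> ring
end
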